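/- For all j, k ∈ 𝒵_L with j₃k₃ ≠ 0, j' ≠ 0 and k' = −j', setting l = j + k and assuming l ≠ 0 (so l' = 0 and l₃ = j₃ + k₃ ≠ 0), and for all r, s ∈ {−1,+1}: B_{jkl}^{rs0} + B_{kjl}^{sr0} = |M| sgn(l₃) (|j'| |k'| / (2 |j| |k|)) (j₃ + k₃)(ω_j^r + ω_k^s); consequently |B_{jkl}^{rs0} + B_{kjl}^{sr0}| ≤ (|M|/2)(|j₃| + |k₃|) |ω_j^r + ω_k^s|. -/

import Mathlib

noncomputable section
open scoped Classical

abbrev V3 := Fin 3 → ℝ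

/-- Euclidean norm of a vector in ℝ³. -/
def enorm3 (k : V3) : ℝ := Real.sqrt (k 0 ^ 2 + k 1 ^ 2 + k 2 ^ 2)

/-- Horizontal part k' = (k₁, k₂, 0). -/
def horiz (k : V3) : V3 := ![k 0, k 1, 0]

/-- The lattice 𝒵_L of wavevectors. -/
def ZL (L₁ L₂ L₃ : ℝ) : Set V3 :=
  {k | ∃ n : Fin 3 → ℤ,
    k = ![2 * Real.pi * (n 0 : ℝ) / L₁, 2 * Real.pi * (n 1 : ℝ) / L₂,
          2 * Real.pi * (n 2 : ℝ) / L₃]}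

/-- Inertia–gravity frequency ω_k^s = s|k|/k₃. -/
def omg (k : V3) (s : ℝ) : ℝ := s * enorm3 k / k 2

/-- Slow eigenvector X_k^0. -/
def X0 (k : V3) : Fin 3 → ℂ :=
  if horiz k = 0 then ![0, 0, ((Real.sign (k 2) : ℝ) : ℂ)]
  else ![((k 1 / enorm3 k : ℝ) : ℂ), ((-(k 0) / enorm3 k : ℝ) : ℂ), ((k 2 / enorm3 k : ℝ) : ℂ)]

/-- Fast eigenvectors X_k^s, s = ±1. -/
def Xs (k : V3) (s : ℝ) : Fin 3 → ℂ :=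
  if horiz k = 0 then
    ![(((Real.sqrt 2)⁻¹ : ℝ) : ℂ), -Complex.I * s * (((Real.sqrt 2)⁻¹ : ℝ) : ℂ), 0]
  else
    ![(((-(k 1) * k 2 : ℝ) : ℂ) + Complex.I * s * k 0 * enorm3 k) /
        ((Real.sqrt 2 * enorm3 (horiz k) * enorm3 k : ℝ) : ℂ),
      (((k 0 * k 2 : ℝ) : ℂ) + Complex.I * s * k 1 * enorm3 k) /
        ((Real.sqrt 2 * enorm3 (horiz k) * enorm3 k : ℝ) : ℂ),
      ((enorm3 (horiz k) ^ 2 : ℝ) : ℂ) /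
        ((Real.sqrt 2 * enorm3 (horiz k) * enorm3 k : ℝ) : ℂ)]

/-- The incompressible-velocity vector V X_j^r. -/
def VX (j : V3) (r : ℝ) : Fin 3 → ℂ :=
  if horiz j = 0 then Xs j r
  else
    ![(((-(j 1) * j 2 : ℝ) : ℂ) + Complex.I * r * j 0 * enorm3 j) /
        ((Real.sqrt 2 * enorm3 j * enorm3 (horiz j) : ℝ) : ℂ),
      (((j 0 * j 2 : ℝ) : ℂ) + Complex.I * r * j 1 * enorm3 j) /
        ((Real.sqrt 2 * enorm3 j * enorm3 (horiz j) : ℝ) : ℂ),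
      (-Complex.I * r * ((enorm3 (horiz j) ^ 2 * enorm3 j / j 2 : ℝ) : ℂ)) /
        ((Real.sqrt 2 * enorm3 j * enorm3 (horiz j) : ℝ) : ℂ)]

/-- Bilinear pairing a·b on ℂ³. -/
def dotC (a b : Fin 3 → ℂ) : ℂ := a 0 * b 0 + a 1 * b 1 + a 2 * b 2

/-- Pairing of a complex vector with a real vector. -/
def dotR (a : Fin 3 → ℂ) (k : V3) : ℂ :=
  a 0 * (k 0 : ℂ) + a 1 * (k 1 : ℂ) + a 2 * (k 2 : ℂ)

/-- The interaction coefficient B_{jkl}^{rs0}. -/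
def Brs0 (M : ℝ) (j k l : V3) (r s : ℝ) : ℂ :=
  if j + k = l ∧ j 2 * k 2 ≠ 0 ∧ l ≠ 0 then
    Complex.I * M * dotR (VX j r) k * dotC (Xs k s) (X0 l)
  else 0

/-!
Since `l' = j' + k' = 0`, the slow mode `X_l^0` is vertical, so `X_k^s · X_l^0` only sees the
third component `|k'| / (√2 |k|)` of `X_k^s`. In `V X_j^r · k` with `k' = -j'` the real parts
cancel and what is left is `-i r |j'| (j₃ + k₃) / (√2 j₃)`. Hence each coefficient separately
equals `|M| sgn(l₃) (|j'||k'| / (2|j||k|)) (j₃ + k₃) ω_j^r`, and the symmetric sum follows by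
exchanging `j` and `k`. The bound uses `|j'| ≤ |j|`, `|k'| ≤ |k|` and `|j₃ + k₃| ≤ |j₃| + |k₃|`.
-/

namespace Real

theorem abs_sign_le_one (x : ℝ) : |Real.sign x| ≤ 1 := by
  rcases Real.sign_apply_eq x with h | h | h <;> simp [h]

end Real

section Geometry

theorem enorm3_sq (k : V3) : enorm3 k ^ 2 = k 0 ^ 2 + k 1 ^ 2 + k 2 ^ 2 :=
  Real.sq_sqrt (by positivity)

theorem enorm3_nonneg (k : V3) : 0 ≤ enorm3 k := Real.sqrt_nonneg _

theorem enorm3_horiz_sq (k : V3) : enorm3 (horiz k) ^ 2 = k 0 ^ 2 + k 1 ^ 2 := by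
  simp [enorm3_sq, horiz]

theorem horiz_add (j k : V3) : horiz (j + k) = horiz j + horiz k := by
  ext i; fin_cases i <;> simp [horiz]

theorem horiz_eq_zero_iff {k : V3} : horiz k = 0 ↔ k 0 = 0 ∧ k 1 = 0 := by
  constructor
  · intro h; exact ⟨congrFun h 0, congrFun h 1⟩
  · rintro ⟨h0, h1⟩; ext i; fin_cases i <;> simp [horiz, h0, h1]

theorem enorm3_horiz_pos {k : V3} (hk : horiz k ≠ 0) : 0 < enorm3 (horiz k) := by
  refine (enorm3_nonneg _).lt_of_ne fun h => hk (horiz_eq_zero_iff.mpr ?_)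
  have hsq : k 0 ^ 2 + k 1 ^ 2 = 0 := by rw [← enorm3_horiz_sq, ← h]; ring
  constructor <;> nlinarith [sq_nonneg (k 0), sq_nonneg (k 1)]

theorem enorm3_horiz_le (k : V3) : enorm3 (horiz k) ≤ enorm3 k := by
  refine Real.sqrt_le_sqrt ?_
  simp only [horiz, Matrix.cons_val_zero, Matrix.cons_val_one, Matrix.cons_val_two,
    Matrix.head_cons, Matrix.tail_cons]
  nlinarith [sq_nonneg (k 2)]

theorem enorm3_pos_of_horiz_ne_zero {k : V3} (hk : horiz k ≠ 0) : 0 < enorm3 k :=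
  (enorm3_horiz_pos hk).trans_le (enorm3_horiz_le k)

theorem enorm3_horiz_div_le_one (k : V3) : enorm3 (horiz k) / enorm3 k ≤ 1 :=
  div_le_one_of_le₀ (enorm3_horiz_le k) (enorm3_nonneg k)

end Geometry

section Coefficients

theorem X0_of_horiz_eq_zero {l : V3} (hl : horiz l = 0) :
    X0 l = ![0, 0, ((Real.sign (l 2) : ℝ) : ℂ)] := by
  rw [X0, if_pos hl]

theorem dotC_Xs_X0_of_horiz_eq_zero {k l : V3} (s : ℝ) (hk : horiz k ≠ 0) (hl : horiz l = 0) :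
    dotC (Xs k s) (X0 l) =
      ((enorm3 (horiz k) / (Real.sqrt 2 * enorm3 k) * Real.sign (l 2) : ℝ) : ℂ) := by
  have hk' := (enorm3_horiz_pos hk).ne'
  have hcancel : enorm3 (horiz k) ^ 2 / (Real.sqrt 2 * enorm3 (horiz k) * enorm3 k) =
      enorm3 (horiz k) / (Real.sqrt 2 * enorm3 k) := by
    field_simp
  rw [dotC, X0_of_horiz_eq_zero hl, Xs, if_neg hk, ← hcancel]
  simp only [Matrix.cons_val_zero, Matrix.cons_val_one, Matrix.cons_val_two,
    Matrix.head_cons, Matrix.tail_cons]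
  push_cast
  ring

theorem dotR_VX_of_horiz_eq_neg {j k : V3} (r : ℝ) (hj : horiz j ≠ 0) (hj2 : j 2 ≠ 0)
    (hk : horiz k = -horiz j) :
    dotR (VX j r) k =
      Complex.I * ((-r * enorm3 (horiz j) * (j 2 + k 2) / (Real.sqrt 2 * j 2) : ℝ) : ℂ) := by
  have hk0 : k 0 = -j 0 := by simpa [horiz] using congrFun hk 0
  have hk1 : k 1 = -j 1 := by simpa [horiz] using congrFun hk 1
  have hsq : ((enorm3 (horiz j) : ℝ) : ℂ) ^ 2 = (j 0 : ℂ) ^ 2 + (j 1 : ℂ) ^ 2 := by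
    exact_mod_cast enorm3_horiz_sq j
  have hj2C : (j 2 : ℂ) ≠ 0 := by exact_mod_cast hj2
  have hnjC : ((enorm3 j : ℝ) : ℂ) ≠ 0 := by exact_mod_cast (enorm3_pos_of_horiz_ne_zero hj).ne'
  have hhjC : ((enorm3 (horiz j) : ℝ) : ℂ) ≠ 0 := by exact_mod_cast (enorm3_horiz_pos hj).ne'
  have h2C : ((Real.sqrt 2 : ℝ) : ℂ) ≠ 0 := by exact_mod_cast (by positivity : 0 < Real.sqrt 2).ne'
  rw [dotR, VX, if_neg hj, hk0, hk1]
  simp only [Matrix.cons_val_zero, Matrix.cons_val_one, Matrix.cons_val_two,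
    Matrix.head_cons, Matrix.tail_cons]
  push_cast
  field_simp
  linear_combination ((j 2 : ℂ) * Complex.I * (r : ℂ) * ((enorm3 j : ℝ) : ℂ)) * hsq

theorem Brs0_of_horiz_eq_neg (M : ℝ) {j k l : V3} (r s : ℝ) (hjk3 : j 2 * k 2 ≠ 0)
    (hj : horiz j ≠ 0) (hk : horiz k = -horiz j) (hl : l = j + k) (hl0 : l ≠ 0) :
    Brs0 M j k l r s =
      ((M * Real.sign (l 2) * (enorm3 (horiz j) * enorm3 (horiz k) / (2 * enorm3 j * enorm3 k)) *
        (j 2 + k 2) * omg j r : ℝ) : ℂ) := by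
  have hk' : horiz k ≠ 0 := by rw [hk]; exact neg_ne_zero.mpr hj
  have hl' : horiz l = 0 := by rw [hl, horiz_add, hk, add_neg_cancel]
  have hj2 := left_ne_zero_of_mul hjk3
  have hnj := (enorm3_pos_of_horiz_ne_zero hj).ne'
  have hnk := (enorm3_pos_of_horiz_ne_zero hk').ne'
  have h2 : Real.sqrt 2 ^ 2 = 2 := Real.sq_sqrt zero_le_two
  rw [Brs0, if_pos ⟨hl.symm, hjk3, hl0⟩, dotR_VX_of_horiz_eq_neg r hj hj2 hk,
    dotC_Xs_X0_of_horiz_eq_zero s hk' hl', omg]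
  have hII : ∀ a b : ℝ, Complex.I * M * (Complex.I * a) * b = ((-(M * a * b) : ℝ) : ℂ) := by
    intro a b
    push_cast
    linear_combination (M * a * b : ℂ) * Complex.I_sq
  rw [hII]
  congr 1
  field_simp
  rw [h2]
  ring

theorem abs_coefficient_le {M : ℝ} (hM : 0 ≤ M) (j k l : V3) (w : ℝ) :
    |M * Real.sign (l 2) * (enorm3 (horiz j) * enorm3 (horiz k) / (2 * enorm3 j * enorm3 k)) *
        (j 2 + k 2) * w| ≤ M / 2 * (|j 2| + |k 2|) * |w| := by
  have hratio : enorm3 (horiz j) * enorm3 (horiz k) / (2 * enorm3 j * enorm3 k) =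
      (enorm3 (horiz j) / enorm3 j) * (enorm3 (horiz k) / enorm3 k) / 2 := by
    ring
  have hprod : (enorm3 (horiz j) / enorm3 j) * (enorm3 (horiz k) / enorm3 k) ≤ 1 :=
    mul_le_one₀ (enorm3_horiz_div_le_one j)
      (div_nonneg (enorm3_nonneg _) (enorm3_nonneg _)) (enorm3_horiz_div_le_one k)
  have hnonneg : 0 ≤ (enorm3 (horiz j) / enorm3 j) * (enorm3 (horiz k) / enorm3 k) := by
    unfold enorm3; positivity
  rw [hratio, abs_mul, abs_mul, abs_mul, abs_mul, abs_of_nonneg hM,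
    abs_of_nonneg (by positivity : (0 : ℝ) ≤ _ / 2)]
  calc M * |Real.sign (l 2)| * ((enorm3 (horiz j) / enorm3 j) * (enorm3 (horiz k) / enorm3 k) / 2)
        * |j 2 + k 2| * |w|
      ≤ M * 1 * (1 / 2) * (|j 2| + |k 2|) * |w| := by
        gcongr
        · exact Real.abs_sign_le_one _
        · exact abs_add_le _ _
    _ = M / 2 * (|j 2| + |k 2|) * |w| := by ring

end Coefficients

theorem case_l_horizontal_zero_general
    (L₁ L₂ L₃ : ℝ) (hL₁ : 0 < L₁) (hL₂ : 0 < L₂) (hL₃ : 0 < L₃)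
    (j k : V3)
    (hjk3 : j 2 * k 2 ≠ 0) (hj' : horiz j ≠ 0) (hk' : horiz k = -horiz j)
    (l : V3) (hlsum : l = j + k) (hl0 : l ≠ 0)
    (r s : ℝ) :
    Brs0 (L₁ * L₂ * L₃) j k l r s + Brs0 (L₁ * L₂ * L₃) k j l s r =
      (((L₁ * L₂ * L₃) * Real.sign (l 2) *
        (enorm3 (horiz j) * enorm3 (horiz k) / (2 * enorm3 j * enorm3 k)) *
        (j 2 + k 2) * (omg j r + omg k s) : ℝ) : ℂ) ∧
    ‖Brs0 (L₁ * L₂ * L₃) j k l r s + Brs0 (L₁ * L₂ * L₃) k j l s r‖ ≤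
      (L₁ * L₂ * L₃) / 2 * (|j 2| + |k 2|) * |omg j r + omg k s| := by
  have hk_ne : horiz k ≠ 0 := by rw [hk']; exact neg_ne_zero.mpr hj'
  have hsum : Brs0 (L₁ * L₂ * L₃) j k l r s + Brs0 (L₁ * L₂ * L₃) k j l s r =
      (((L₁ * L₂ * L₃) * Real.sign (l 2) *
        (enorm3 (horiz j) * enorm3 (horiz k) / (2 * enorm3 j * enorm3 k)) *
        (j 2 + k 2) * (omg j r + omg k s) : ℝ) : ℂ) := by
    rw [Brs0_of_horiz_eq_neg _ r s hjk3 hj' hk' hlsum hl0,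
      Brs0_of_horiz_eq_neg _ s r (by rwa [mul_comm]) hk_ne (by rw [hk', neg_neg])
        (hlsum.trans (add_comm j k)) hl0]
    push_cast
    ring
  refine ⟨hsum, ?_⟩
  rw [hsum, Complex.norm_real, Real.norm_eq_abs]
  exact abs_coefficient_le (by positivity) j k l _

/-- the case l' = 0 (eq. (A.14)–(A.15)). -/
theorem case_l_horizontal_zero
    (L₁ L₂ L₃ : ℝ) (hL₁ : 0 < L₁) (hL₂ : 0 < L₂) (hL₃ : 0 < L₃)
    (j k : V3) (hj : j ∈ ZL L₁ L₂ L₃) (hk : k ∈ ZL L₁ L₂ L₃)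
    (hjk3 : j 2 * k 2 ≠ 0) (hj' : horiz j ≠ 0) (hk' : horiz k = -horiz j)
    (l : V3) (hlsum : l = j + k) (hl0 : l ≠ 0)
    (r s : ℝ) (hr : r = 1 ∨ r = -1) (hs : s = 1 ∨ s = -1) :
    Brs0 (L₁ * L₂ * L₃) j k l r s + Brs0 (L₁ * L₂ * L₃) k j l s r =
      (((L₁ * L₂ * L₃) * Real.sign (l 2) *
        (enorm3 (horiz j) * enorm3 (horiz k) / (2 * enorm3 j * enorm3 k)) *
        (j 2 + k 2) * (omg j r + omg k s) : ℝ) : ℂ) ∧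
    ‖Brs0 (L₁ * L₂ * L₃) j k l r s + Brs0 (L₁ * L₂ * L₃) k j l s r‖ ≤
      (L₁ * L₂ * L₃) / 2 * (|j 2| + |k 2|) * |omg j r + omg k s| :=
  case_l_horizontal_zero_general L₁ L₂ L₃ hL₁ hL₂ hL₃ j k hjk3 hj' hk' l hlsum hl0 r s
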